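/- Let j, i be integers with 1 ≤ j < i. Define g : ℝ × ℝ → ℝ by g(u, v) = Σ_{l=j}^{i-1} (u^l / l!) · e^{-v} · ( Σ_{l'=0}^{i-l-1} (v - u)^{l'} / l'! ). Then for all real u, v, the iterated partial derivative ∂/∂v ( ∂/∂u g )(u, v) exists and equals -( u^{j-1} / (j-1)! ) · e^{-v} · ( (v - u)^{i-j-1} / (i-j-1)! ). -/

import Mathlib

/-!
With `E_n(x) = ∑_{m<n} x^m/m!` we have `E_n' = E_{n-1}` and `E_{n+1} = E_n + x^n/n!`.
Hence `∂/∂u` of the `l`-th summand of `g` is `A l - A (l + 1)` with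
`A l = e^{-v} u^{l-1}/(l-1)! E_{i-l}(v-u)`, the sum telescopes to
`∂g/∂u = e^{-v} u^{j-1}/(j-1)! E_{i-j}(v-u)`, and differentiating `e^{-v} E_{n+1}(v-u)` in `v`
leaves only `-e^{-v} (v-u)^n/n!`.
-/

open Finset Nat

noncomputable def expTrunc (n : ℕ) (x : ℝ) : ℝ :=
  ∑ m ∈ range n, x ^ m / m !

lemma expTrunc_succ (n : ℕ) (x : ℝ) : expTrunc (n + 1) x = expTrunc n x + x ^ n / n ! :=
  sum_range_succ _ _

@[simp]
lemma expTrunc_zero : expTrunc 0 = 0 :=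
  funext fun _ => sum_range_zero _

lemma hasDerivAt_pow_succ_div_factorial (n : ℕ) (x : ℝ) :
    HasDerivAt (fun y : ℝ => y ^ (n + 1) / (n + 1)!) (x ^ n / n !) x := by
  refine ((hasDerivAt_pow (n + 1) x).div_const ((n + 1)! : ℝ)).congr_deriv ?_
  rw [factorial_succ, cast_mul, mul_div_mul_left _ _ (by positivity)]
  simp

lemma hasDerivAt_expTrunc (n : ℕ) (x : ℝ) :
    HasDerivAt (expTrunc n) (expTrunc (n - 1) x) x := by
  cases n with
  | zero => simp
  | succ n =>
    have h : expTrunc (n + 1) = fun y : ℝ => ∑ m ∈ range n, y ^ (m + 1) / ((m + 1)! : ℝ) + 1 := by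
      funext y
      simp [expTrunc, sum_range_succ']
    rw [h]
    exact (HasDerivAt.fun_sum fun m _ => hasDerivAt_pow_succ_div_factorial m x).add_const 1

lemma hasDerivAt_sum_pow_div_factorial_mul_expTrunc {j i : ℕ} (hj : 1 ≤ j) (hji : j ≤ i)
    (w u : ℝ) :
    HasDerivAt (fun u' : ℝ => ∑ l ∈ Ico j i, u' ^ l / l ! * expTrunc (i - l) (w - u'))
      (u ^ (j - 1) / (j - 1)! * expTrunc (i - j) (w - u)) u := by
  set A : ℕ → ℝ := fun l => u ^ (l - 1) / (l - 1)! * expTrunc (i - l) (w - u)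
  have hterm : ∀ l ∈ Ico j i, HasDerivAt (fun u' : ℝ => u' ^ l / l ! * expTrunc (i - l) (w - u'))
      (-(A (l + 1) - A l)) u := by
    intro l hl
    obtain ⟨k, rfl⟩ : ∃ k, l = k + 1 := ⟨l - 1, by grind⟩
    have hE := (hasDerivAt_expTrunc (i - (k + 1)) (w - u)).comp u ((hasDerivAt_id u).const_sub w)
    refine ((hasDerivAt_pow_succ_div_factorial k u).mul hE).congr_deriv ?_
    simp only [A, Function.comp_apply, Nat.sub_sub, add_tsub_cancel_right]
    ring
  refine (HasDerivAt.fun_sum hterm).congr_deriv ?_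
  rw [sum_neg_distrib, sum_Ico_sub A hji]
  simp [A]

lemma hasDerivAt_exp_neg_mul_expTrunc_succ (n : ℕ) (u v : ℝ) :
    HasDerivAt (fun v' : ℝ => Real.exp (-v') * expTrunc (n + 1) (v' - u))
      (-(Real.exp (-v) * ((v - u) ^ n / n !))) v := by
  have hE := (hasDerivAt_expTrunc (n + 1) (v - u)).comp v ((hasDerivAt_id' v).sub_const u)
  refine ((hasDerivAt_neg v).exp.mul hE).congr_deriv ?_
  simp only [Function.comp_apply, add_tsub_cancel_right, expTrunc_succ]
  ring

/-- The analytic core of Appendix B of the paper: for `1 ≤ j < i` and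
`g (u, v) = ∑_{l=j}^{i-1} (u^l/l!) e^{-v} ∑_{l'=0}^{i-l-1} (v-u)^{l'}/l'!`,
the iterated partial derivative `∂/∂v (∂/∂u g)` exists everywhere and equals
`-(u^{j-1}/(j-1)!) e^{-v} (v-u)^{i-j-1}/(i-j-1)!`. -/
theorem stmt_2 (j i : ℕ) (hj : 1 ≤ j) (hji : j < i)
    (g : ℝ → ℝ → ℝ)
    (hg : ∀ u v, g u v = ∑ l ∈ Finset.Ico j i, (u ^ l / (l.factorial : ℝ)) *
      Real.exp (-v) * ∑ m ∈ Finset.range (i - l), (v - u) ^ m / (m.factorial : ℝ)) :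
    ∀ u v : ℝ,
      DifferentiableAt ℝ (fun u' : ℝ => g u' v) u ∧
      HasDerivAt (fun v' : ℝ => deriv (fun u' : ℝ => g u' v') u)
        (-(u ^ (j - 1) / ((j - 1).factorial : ℝ)) * Real.exp (-v) *
          ((v - u) ^ (i - j - 1) / ((i - j - 1).factorial : ℝ))) v := by
  intro u v
  have hpartial : ∀ v', HasDerivAt (fun u' => g u' v')
      (u ^ (j - 1) / (j - 1)! * (Real.exp (-v') * expTrunc (i - j) (v' - u))) u := by
    intro v'
    have hg' : (fun u' => g u' v') = fun u' =>
        Real.exp (-v') * ∑ l ∈ Ico j i, u' ^ l / l ! * expTrunc (i - l) (v' - u') := by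
      funext u'
      rw [hg, mul_sum]
      simp only [expTrunc, mul_left_comm (Real.exp (-v')), mul_assoc]
    rw [hg']
    exact ((hasDerivAt_sum_pow_div_factorial_mul_expTrunc hj hji.le v' u).const_mul _).congr_deriv
      (by ring)
  refine ⟨(hpartial v).differentiableAt, ?_⟩
  obtain ⟨n, hn⟩ : ∃ n, i - j = n + 1 := ⟨i - j - 1, by omega⟩
  rw [funext fun v' => (hpartial v').deriv, hn, add_tsub_cancel_right]
  exact ((hasDerivAt_exp_neg_mul_expTrunc_succ _ u v).const_mul _).congr_deriv (by ring)
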